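/- Let S = (s_{ij}) be symmetric nonnegative with zero diagonal, λ ∈ [0, 1/2], and F(A) = ∑_{i∈A}∑_{j∈V} s_{ij} − λ∑_{i∈A}∑_{j∈A} s_{ij}. Then there exist jointly distributed discrete random variables X_1, ..., X_n such that H(X_A) = F(A) for all A ⊆ [n]; i.e., the monotone graph-cut function is entropic. -/

import Mathlib

open Finset

/-- Shannon entropy of a random variable `X` on a finite probability space with pmf `p`. -/
noncomputable def entropy {Ω : Type} [Fintype Ω] {S : Type} (p : Ω → ℝ) (X : Ω → S) : ℝ := by
  classical
  exact ∑ s ∈ Finset.univ.image X,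
    Real.negMulLog (∑ ω ∈ Finset.univ.filter (fun ω => X ω = s), p ω)

/-- `p` is a probability mass function. -/
def IsPMF {Ω : Type} [Fintype Ω] (p : Ω → ℝ) : Prop :=
  (∀ ω, 0 ≤ p ω) ∧ ∑ ω, p ω = 1

/-- Mutual independence of a finite family of random variables. -/
def MutuallyIndep {Ω : Type} [Fintype Ω] {ι : Type} [Fintype ι] {S : Type}
    (p : Ω → ℝ) (Z : ι → Ω → S) : Prop := by
  classical
  exact ∀ s : ι → S,
    (∑ ω ∈ Finset.univ.filter (fun ω => ∀ u, Z u ω = s u), p ω) =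
      ∏ u, ∑ ω ∈ Finset.univ.filter (fun ω => Z u ω = s u), p ω

/-- A set function on `[n]` is entropic if it is the joint-entropy function of
jointly distributed discrete random variables. -/
def IsEntropic {n : ℕ} (f : Finset (Fin n) → ℝ) : Prop :=
  ∃ (N : ℕ) (S : Type) (p : Fin N → ℝ) (X : Fin n → Fin N → S),
    IsPMF p ∧ ∀ A : Finset (Fin n), f A = entropy p (fun ω => fun i : A => X i.1 ω)

/-!
Give every ordered pair `(i, j)` an independent variable of entropy `λ s i j` seen by both `i` and
`j`, and one of entropy `(1 - 2λ) s i j` seen by `i` alone. By independence, the joint entropy of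
the variables seen by `A` is the total weight of the base variables seen by some vertex of `A`;
by inclusion–exclusion over pairs touching `A`, and the symmetry of `s`, this weight is `F(A)`.
-/

open Real

section Entropy

variable {Ω Ω' S T : Type} [Fintype Ω]

lemma entropy_eq_sum_image [DecidableEq S] (p : Ω → ℝ) (X : Ω → S) :
    entropy p X = ∑ s ∈ univ.image X, negMulLog (∑ ω with X ω = s, p ω) := by
  unfold entropy
  congr!

lemma entropy_eq_sum [Fintype S] [DecidableEq S] (p : Ω → ℝ) (X : Ω → S) :
    entropy p X = ∑ s, negMulLog (∑ ω with X ω = s, p ω) := by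
  rw [entropy_eq_sum_image]
  refine sum_subset (subset_univ _) fun s _ hs => ?_
  have hempty : ∀ ω ∈ univ, ¬X ω = s := fun ω _ hω => hs (hω ▸ mem_image_of_mem X (mem_univ ω))
  rw [filter_false_of_mem hempty, sum_empty, negMulLog_zero]

lemma entropy_comp_of_injOn (p : Ω → ℝ) (X : Ω → S) {g : S → T}
    (hg : Set.InjOn g (Set.range X)) : entropy p (g ∘ X) = entropy p X := by
  classical
  rw [entropy_eq_sum_image, entropy_eq_sum_image, ← image_image, sum_image]
  · refine sum_congr rfl fun s hs => ?_
    obtain ⟨ω₀, -, rfl⟩ := mem_image.mp hs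
    congr 2
    ext ω
    simpa using hg.eq_iff ⟨ω, rfl⟩ ⟨ω₀, rfl⟩
  · intro s hs s' hs' h
    simp only [coe_image, coe_univ, Set.image_univ] at hs hs'
    exact hg hs hs' h

lemma entropy_id [DecidableEq Ω] (p : Ω → ℝ) : entropy p id = ∑ ω, negMulLog (p ω) := by
  rw [entropy_eq_sum]
  simp [filter_eq']

lemma entropy_const {p : Ω → ℝ} (hp : ∑ ω, p ω = 1) (c : S) : entropy p (fun _ => c) = 0 := by
  have hinj : Set.InjOn (fun _ : Unit => c) (Set.range fun _ : Ω => ()) := by simp [Set.InjOn]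
  rw [show (fun _ : Ω => c) = (fun _ : Unit => c) ∘ (fun _ : Ω => ()) from rfl,
    entropy_comp_of_injOn p _ hinj, entropy_eq_sum]
  simp [hp]

lemma entropy_comp_equiv [Fintype Ω'] (p : Ω → ℝ) (X : Ω → S) (σ : Ω' ≃ Ω) :
    entropy (p ∘ σ) (X ∘ σ) = entropy p X := by
  classical
  rw [entropy_eq_sum_image, entropy_eq_sum_image, ← image_image, image_univ_equiv]
  refine sum_congr rfl fun s _ => ?_
  congr 1
  exact sum_equiv σ (by simp) (by simp)

end Entropy

lemma negMulLog_prod {ι : Type} (s : Finset ι) (a : ι → ℝ) :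
    negMulLog (∏ i ∈ s, a i) = -(∏ i ∈ s, a i) * ∑ i ∈ s, log (a i) := by
  by_cases h : ∏ i ∈ s, a i = 0
  · simp [h]
  · rw [negMulLog, log_prod (prod_ne_zero_iff.mp h)]

section ProductPMF

variable {ι κ τ : Type} [Fintype ι] [Fintype κ]

def piPMF (Q : ι → κ → ℝ) (f : ι → κ) : ℝ := ∏ i, Q i (f i)

lemma isPMF_piPMF [DecidableEq ι] {Q : ι → κ → ℝ} (hQ : ∀ i, IsPMF (Q i)) : IsPMF (piPMF Q) :=
  ⟨fun f => prod_nonneg fun i _ => (hQ i).1 (f i), by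
    simp only [piPMF, ← Fintype.prod_sum, (hQ _).2, prod_const_one]⟩

lemma sum_negMulLog_piPMF [DecidableEq ι] {Q : ι → κ → ℝ} (hQ : ∀ i, ∑ x, Q i x = 1) :
    ∑ f, negMulLog (piPMF Q f) = ∑ i, ∑ x, negMulLog (Q i x) := by
  -- weighted by `piPMF Q f`, the `i`-th term of `-log (piPMF Q f)` becomes a product over `j`,
  -- whose sum over `f` factorises by `Fintype.prod_sum`
  have hsplit : ∀ i f, piPMF Q f * -log (Q i (f i)) =
      ∏ j, Q j (f j) * if j = i then -log (Q j (f j)) else 1 := by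
    intro i f
    rw [prod_mul_distrib, Fintype.prod_ite_eq', piPMF]
  have hmarg : ∀ i, ∏ j, ∑ x, Q j x * (if j = i then -log (Q j x) else 1) =
      ∑ x, negMulLog (Q i x) := by
    intro i
    rw [← Fintype.prod_ite_eq' i fun j => ∑ x, negMulLog (Q j x)]
    refine prod_congr rfl fun j _ => ?_
    split_ifs with hj
    · simp [negMulLog, hj]
    · simp [hQ j]
  calc ∑ f, negMulLog (piPMF Q f)
      = ∑ f, ∑ i, piPMF Q f * -log (Q i (f i)) := by
        simp only [piPMF, negMulLog_prod, mul_sum, neg_mul, mul_neg, sum_neg_distrib]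
    _ = ∑ i, ∑ x, negMulLog (Q i x) := by
        rw [sum_comm]
        refine sum_congr rfl fun i _ => ?_
        simp only [hsplit, ← hmarg i, Fintype.prod_sum]

lemma sum_piPMF_fiber [DecidableEq ι] [DecidableEq τ] (Q : ι → κ → ℝ) (φ : ι → κ → τ)
    (g : ι → τ) :
    ∑ f with (fun i => φ i (f i)) = g, piPMF Q f = ∏ i, ∑ x with φ i x = g i, Q i x := by
  rw [prod_univ_sum]
  congr 1
  ext f
  simp [Fintype.mem_piFinset, funext_iff]

lemma entropy_piPMF_map [DecidableEq ι] [Fintype τ] [DecidableEq τ] {Q : ι → κ → ℝ}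
    (hQ : ∀ i, ∑ x, Q i x = 1) (φ : ι → κ → τ) :
    entropy (piPMF Q) (fun f i => φ i (f i)) = ∑ i, entropy (Q i) (φ i) := by
  simp only [entropy_eq_sum, sum_piPMF_fiber]
  exact sum_negMulLog_piPMF fun i => by rw [sum_fiberwise univ (φ i) (Q i), hQ]

end ProductPMF

/-- Mixing a point mass (entropy `0`) with the uniform distribution (entropy `log |κ|`) reaches
every value in between, by the intermediate value theorem. -/
lemma exists_isPMF_sum_negMulLog_eq {κ : Type} [Fintype κ] [DecidableEq κ] [Nonempty κ] {h : ℝ}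
    (h0 : 0 ≤ h) (hle : h ≤ log (Fintype.card κ)) :
    ∃ q : κ → ℝ, IsPMF q ∧ ∑ x, negMulLog (q x) = h := by
  obtain ⟨x₀⟩ := ‹Nonempty κ›
  set c : ℝ := (Fintype.card κ : ℝ)
  have hc : 0 < c := Nat.cast_pos.mpr Fintype.card_pos
  let q : ℝ → κ → ℝ := fun t x => (1 - t) * (if x = x₀ then 1 else 0) + t / c
  have hq0 : q 0 = fun x => if x = x₀ then 1 else 0 := by simp [q]
  have hq1 : q 1 = fun _ => c⁻¹ := by simp [q]
  have hcont : Continuous fun t => ∑ x, negMulLog (q t x) := by fun_prop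
  obtain ⟨t, ⟨ht0, ht1⟩, hth⟩ := intermediate_value_Icc zero_le_one hcont.continuousOn
    (show h ∈ Set.Icc _ _ by
      simp only [hq0, hq1, apply_ite negMulLog, negMulLog_one, negMulLog_zero,
        sum_ite_eq', mem_univ, if_true, sum_const, card_univ, nsmul_eq_mul]
      have hlog : c * negMulLog c⁻¹ = log c := by
        rw [negMulLog, log_inv]
        field_simp
      exact ⟨h0, hlog ▸ hle⟩)
  refine ⟨q t, ⟨fun x => by positivity, ?_⟩, hth⟩
  simp only [q, sum_add_distrib, ← mul_sum, sum_ite_eq', mem_univ, if_true, sum_const,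
    card_univ, nsmul_eq_mul]
  field_simp
  ring

lemma exists_isPMF_family_sum_negMulLog_eq {E : Type} [Fintype E] {w : E → ℝ}
    (hw : ∀ u, 0 ≤ w u) : ∃ (m : ℕ) (Q : E → Fin (m + 1) → ℝ),
      (∀ u, IsPMF (Q u)) ∧ ∀ u, ∑ x, negMulLog (Q u x) = w u := by
  obtain ⟨m, hm⟩ := exists_nat_gt (exp (∑ u, w u))
  have hlog : ∀ u, w u ≤ log (Fintype.card (Fin (m + 1))) := fun u => calc
    w u ≤ ∑ v, w v := single_le_sum (fun v _ => hw v) (mem_univ u)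
    _ ≤ log (Fintype.card (Fin (m + 1))) := by
      rw [le_log_iff_exp_le (by positivity), Fintype.card_fin]
      push_cast
      linarith
  choose Q hQ using fun u => exists_isPMF_sum_negMulLog_eq (hw u) (hlog u)
  exact ⟨m, Q, fun u => (hQ u).1, fun u => (hQ u).2⟩

/-- Vertex `i` observes the independent base variables indexed by `c i`, the base variable `u`
having entropy `w u`. -/
theorem isEntropic_sum_biUnion {n : ℕ} {E : Type} [Fintype E] [DecidableEq E] (w : E → ℝ)
    (hw : ∀ u, 0 ≤ w u) (c : Fin n → Finset E) :
    IsEntropic fun A => ∑ u ∈ A.biUnion c, w u := by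
  obtain ⟨m, Q, hQ, hQw⟩ := exists_isPMF_family_sum_negMulLog_eq hw
  let σ := (Fintype.equivFin (E → Fin (m + 1))).symm
  let mask (C : Finset E) (f : E → Fin (m + 1)) (u : E) : Option (Fin (m + 1)) :=
    if u ∈ C then some (f u) else none
  refine ⟨_, _, piPMF Q ∘ σ, fun i => mask (c i) ∘ σ, ?pmf, fun A => ?_⟩
  case pmf =>
    obtain ⟨hnonneg, hsum⟩ := isPMF_piPMF hQ
    exact ⟨fun ω => hnonneg _, by rw [← hsum]; exact Equiv.sum_comp σ _⟩
  -- the observation of `A` is a function of the mask of `A.biUnion c`, and conversely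
  let observe (y : E → Option (Fin (m + 1))) (i : A) (u : E) := if u ∈ c i then y u else none
  have hobserve : (fun f (i : A) => mask (c i) f) = observe ∘ mask (A.biUnion c) := by
    ext f i u
    by_cases hu : u ∈ c i
    · have : u ∈ A.biUnion c := mem_biUnion.mpr ⟨i, i.2, hu⟩
      simp only [observe, mask, Function.comp_apply, hu, this, if_true]
    · simp [observe, mask, hu]
  have hinj : Set.InjOn observe (Set.range (mask (A.biUnion c))) := by
    rintro _ ⟨f, rfl⟩ _ ⟨f', rfl⟩ h
    ext1 u
    by_cases hu : u ∈ A.biUnion c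
    · obtain ⟨i, hi, hui⟩ := mem_biUnion.mp hu
      simpa [observe, hui] using congrFun (congrFun h ⟨i, hi⟩) u
    · simp [mask, hu]
  have hmask : ∀ u, entropy (Q u) (fun x => if u ∈ A.biUnion c then some x else none) =
      if u ∈ A.biUnion c then w u else 0 := by
    intro u
    split_ifs
    · rw [← hQw u, ← entropy_id]
      exact entropy_comp_of_injOn (Q u) id (Option.some_injective _).injOn
    · exact entropy_const (hQ u).2 none
  calc ∑ u ∈ A.biUnion c, w u
      = ∑ u, entropy (Q u) (fun x => if u ∈ A.biUnion c then some x else none) := by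
        simp only [hmask, sum_ite_mem, univ_inter]
    _ = entropy (piPMF Q) (mask (A.biUnion c)) := (entropy_piPMF_map (fun u => (hQ u).2) _).symm
    _ = entropy (piPMF Q) (fun f (i : A) => mask (c i) f) := by
        rw [hobserve, entropy_comp_of_injOn _ _ hinj]
    _ = _ := (entropy_comp_equiv _ _ σ).symm

section GraphCut

variable {n : ℕ}

/-- `inl (i, j)` is seen by `i` and `j`, `inr (i, j)` by `i` alone; the paper's shared variable
`Z_{ij}` of entropy `2 λ s i j` is split into `inl (i, j)` and `inl (j, i)`. -/
def graphCutCover (k : Fin n) : Finset ((Fin n × Fin n) ⊕ (Fin n × Fin n)) :=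
  ({k} ×ˢ univ ∪ univ ×ˢ {k}).disjSum ({k} ×ˢ univ)

def graphCutWeight (s : Fin n → Fin n → ℝ) (lam : ℝ) : (Fin n × Fin n) ⊕ (Fin n × Fin n) → ℝ :=
  Sum.elim (fun e => lam * s e.1 e.2) (fun e => (1 - 2 * lam) * s e.1 e.2)

lemma graphCutWeight_nonneg {s : Fin n → Fin n → ℝ} (hs : ∀ i j, 0 ≤ s i j) {lam : ℝ}
    (hlam0 : 0 ≤ lam) (hlam2 : lam ≤ 1 / 2) (u : (Fin n × Fin n) ⊕ (Fin n × Fin n)) :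
    0 ≤ graphCutWeight s lam u := by
  rcases u with ⟨i, j⟩ | ⟨i, j⟩
  · exact mul_nonneg hlam0 (hs i j)
  · exact mul_nonneg (by linarith) (hs i j)

lemma biUnion_graphCutCover (A : Finset (Fin n)) :
    A.biUnion graphCutCover = (A ×ˢ univ ∪ univ ×ˢ A).disjSum (A ×ˢ univ) := by
  ext (⟨i, j⟩ | ⟨i, j⟩) <;> simp [graphCutCover, and_or_left, exists_or]

lemma sum_biUnion_graphCutCover {s : Fin n → Fin n → ℝ} (hsym : ∀ i j, s i j = s j i) (lam : ℝ)
    (A : Finset (Fin n)) :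
    ∑ u ∈ A.biUnion graphCutCover, graphCutWeight s lam u =
      (∑ i ∈ A, ∑ j, s i j) - lam * ∑ i ∈ A, ∑ j ∈ A, s i j := by
  have hswap : ∑ e ∈ univ ×ˢ A, s e.1 e.2 = ∑ e ∈ A ×ˢ univ, s e.1 e.2 := by
    rw [sum_product_right, sum_product]
    simp only [hsym]
  have hunion := sum_union_inter (s₁ := A ×ˢ univ) (s₂ := univ ×ˢ A) (f := fun e => s e.1 e.2)
  rw [product_inter_product, inter_univ, univ_inter, hswap] at hunion
  rw [biUnion_graphCutCover, sum_disjSum]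
  simp only [graphCutWeight, Sum.elim_inl, Sum.elim_inr, ← mul_sum, sum_product] at hunion ⊢
  linear_combination lam * hunion

end GraphCut

theorem monotone_graph_cut_is_entropic_general {n : ℕ}
    (s : Fin n → Fin n → ℝ) (hsym : ∀ i j, s i j = s j i)
    (hnn : ∀ i j, 0 ≤ s i j)
    (lam : ℝ) (hlam0 : 0 ≤ lam) (hlam2 : lam ≤ 1 / 2) :
    IsEntropic (fun A : Finset (Fin n) =>
      (∑ i ∈ A, ∑ j : Fin n, s i j) - lam * ∑ i ∈ A, ∑ j ∈ A, s i j) := by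
  simpa only [sum_biUnion_graphCutCover hsym] using
    isEntropic_sum_biUnion _ (graphCutWeight_nonneg hnn hlam0 hlam2) graphCutCover

/-- The monotone graph-cut function `F(A) = ∑_{i∈A}∑_{j∈V} s_{ij} - λ∑_{i∈A}∑_{j∈A} s_{ij}`
with `λ ∈ [0, 1/2]` is entropic. -/
theorem monotone_graph_cut_is_entropic {n : ℕ}
    (s : Fin n → Fin n → ℝ) (hsym : ∀ i j, s i j = s j i)
    (hnn : ∀ i j, 0 ≤ s i j) (hdiag : ∀ i, s i i = 0)
    (lam : ℝ) (hlam0 : 0 ≤ lam) (hlam2 : lam ≤ 1 / 2) :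
    IsEntropic (fun A : Finset (Fin n) =>
      (∑ i ∈ A, ∑ j : Fin n, s i j) - lam * ∑ i ∈ A, ∑ j ∈ A, s i j) :=
  monotone_graph_cut_is_entropic_general s hsym hnn lam hlam0 hlam2
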